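/- arXiv:1606.06444 — 2 statements merged into one kernel-verified Lean document; each statement's English description precedes it below -/
import Mathlib

section
/- In the free group F_n, the Hurwitz action of the braid group B_n on the set Red(γ) of n-tuples (r_1,...,r_n) of conjugates of the generators whose product equals γ = σ_1σ_2⋯σ_n is transitive. -/
/-!
Both tuples are connected to the tuple of generators `(σ₁, …, σₙ)`, by induction on the total
word length of the tuple. Every conjugate of a generator has a reduced word `C a C⁻¹`. If some
Hurwitz move or its inverse shortens the entry it conjugates, apply it. Otherwise, for adjacent
entries `u = W x W⁻¹` and `v = V y V⁻¹`, the free cancellation between a partial product ending in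
`x W⁻¹` and `v` never reaches a middle letter: if it did, `W x⁻¹` would be a prefix of `V` or
`V y` a prefix of `W`, and conjugating by `u` or by `v⁻¹` would shorten an entry. Inductively, the
reduced word of `r₁ ⋯ r_k` then has length at least `k + |C_i|` for every `i`. The product is the
positive word `σ₁ ⋯ σₙ`, so the degree map `F_n → ℤ` shows that this length is `k`; hence all
`C_i` are empty, the entries are generators, and the tuple is read off from the product.
-/

/-- The Hurwitz move `τ_i` on `n`-tuples of elements of a group `G`. -/
def hmove {G : Type*} [Group G] {n : ℕ} (i : ℕ) (h : i + 1 < n) (g : Fin n → G) :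
    Fin n → G :=
  Function.update
    (Function.update g ⟨i, Nat.lt_of_succ_lt h⟩
      (g ⟨i, Nat.lt_of_succ_lt h⟩ * g ⟨i + 1, h⟩ * (g ⟨i, Nat.lt_of_succ_lt h⟩)⁻¹))
    ⟨i + 1, h⟩ (g ⟨i, Nat.lt_of_succ_lt h⟩)

/-- One step of the Hurwitz action of the braid group `B_n` on `G^n`. -/
def HurwitzStep {G : Type*} [Group G] {n : ℕ} (x y : Fin n → G) : Prop :=
  ∃ (i : ℕ) (h : i + 1 < n), y = hmove i h x

theorem List.ofFn_update {β : Type*} {n : ℕ} (f : Fin n → β) (i : Fin n) (x : β) :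
    List.ofFn (Function.update f i x) = (List.ofFn f).set i x := by
  apply List.ext_getElem (by simp)
  intro j _ _
  simp [List.getElem_set, Function.update_apply, Fin.ext_iff, eq_comm]

section ListHurwitzStep

variable {G : Type*} [Group G]

def ListHurwitzStep (l l' : List G) : Prop :=
  ∃ l₁ a b l₂, l = l₁ ++ a :: b :: l₂ ∧ l' = l₁ ++ (a * b * a⁻¹) :: a :: l₂

theorem ListHurwitzStep.prod_eq {l l' : List G} (h : ListHurwitzStep l l') : l'.prod = l.prod := by
  obtain ⟨l₁, a, b, l₂, rfl, rfl⟩ := h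
  simp [mul_assoc]

theorem ListHurwitzStep.length_eq {l l' : List G} (h : ListHurwitzStep l l') :
    l'.length = l.length := by
  obtain ⟨l₁, a, b, l₂, rfl, rfl⟩ := h
  simp

theorem Relation.EqvGen.listHurwitzStep_length_eq {l l' : List G}
    (h : Relation.EqvGen ListHurwitzStep l l') : l.length = l'.length := by
  induction h with
  | rel _ _ h => exact h.length_eq.symm
  | refl => rfl
  | symm _ _ _ ih => exact ih.symm
  | trans _ _ _ _ _ ih₁ ih₂ => exact ih₁.trans ih₂

theorem ListHurwitzStep.exists_hurwitzStep_ofFn {n : ℕ} {f : Fin n → G} {l' : List G}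
    (h : ListHurwitzStep (List.ofFn f) l') : ∃ g, l' = List.ofFn g ∧ HurwitzStep f g := by
  obtain ⟨l₁, a, b, l₂, hf, rfl⟩ := h
  have hn : l₁.length + 1 < n := by
    have := congrArg List.length hf
    simp at this
    omega
  obtain ⟨_, ha⟩ : ∃ _ : l₁.length < n, f ⟨l₁.length, _⟩ = a := by
    simpa using congrArg (·[l₁.length]?) hf
  obtain ⟨_, hb⟩ : ∃ _ : l₁.length + 1 < n, f ⟨l₁.length + 1, _⟩ = b := by
    simpa using congrArg (·[l₁.length + 1]?) hf
  refine ⟨hmove l₁.length hn f, ?_, _, hn, rfl⟩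
  rw [hmove, List.ofFn_update, List.ofFn_update, hf, ha, hb]
  simp

theorem Relation.EqvGen.hurwitzStep_of_ofFn {n : ℕ} {f g : Fin n → G}
    (h : Relation.EqvGen ListHurwitzStep (List.ofFn f) (List.ofFn g)) :
    Relation.EqvGen HurwitzStep f g := by
  suffices ∀ l l', Relation.EqvGen ListHurwitzStep l l' →
      ∀ f g : Fin n → G, l = List.ofFn f → l' = List.ofFn g → Relation.EqvGen HurwitzStep f g from
    this _ _ h f g rfl rfl
  intro l l' h
  induction h with
  | rel _ _ h =>
    rintro f g rfl rfl
    obtain ⟨g', hg', hstep⟩ := h.exists_hurwitzStep_ofFn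
    exact .rel _ _ (List.ofFn_injective hg' ▸ hstep)
  | refl =>
    rintro f g rfl hg
    exact List.ofFn_injective hg ▸ .refl _
  | symm _ _ _ ih => exact fun f g hf hg => .symm _ _ (ih g f hg hf)
  | trans l m l' hlm _ ih₁ ih₂ =>
    rintro f g rfl rfl
    have hm : m.length = n := by simpa using hlm.listHurwitzStep_length_eq.symm
    subst hm
    exact .trans _ _ _ (ih₁ f _ rfl List.ofFn_getElem.symm) (ih₂ _ g List.ofFn_getElem.symm rfl)

end ListHurwitzStep

namespace FreeGroup

variable {α : Type*}

def conjWord (C : List (α × Bool)) (a : α) : List (α × Bool) := C ++ (a, true) :: invRev C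

theorem mk_conjWord (C : List (α × Bool)) (a : α) :
    mk (conjWord C a) = mk C * of a * (mk C)⁻¹ := by
  rw [conjWord, inv_mk, of, mul_mk, mul_mk]
  simp

theorem length_conjWord (C : List (α × Bool)) (a : α) :
    (conjWord C a).length = 2 * C.length + 1 := by
  simp [conjWord, invRev_length]
  omega

theorem IsReduced.invRev {L : List (α × Bool)} (h : IsReduced L) : IsReduced (invRev L) := by
  rw [IsReduced, FreeGroup.invRev, List.isChain_reverse, List.isChain_map]
  exact h.imp fun a b hab hba => by simpa using (hab hba.symm).symm

theorem isReduced_map_true (as : List α) : IsReduced (as.map fun a => (a, true)) := by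
  rw [IsReduced, List.isChain_map]
  exact List.isChain_iff_forall_rel_of_append_cons_cons.2 fun _ _ _ _ _ _ => rfl

theorem mk_map_true (as : List α) : mk (as.map fun a => (a, true)) = (as.map of).prod := by
  induction as with
  | nil => rfl
  | cons a as ih => rw [List.map_cons, List.map_cons, List.prod_cons, ← ih, of, mul_mk]; rfl

def IsConjOfGen (u : FreeGroup α) : Prop := ∃ a w, u = w * of a * w⁻¹

theorem IsConjOfGen.conj {u : FreeGroup α} (h : IsConjOfGen u) (g : FreeGroup α) :
    IsConjOfGen (g * u * g⁻¹) := by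
  obtain ⟨a, w, rfl⟩ := h
  exact ⟨a, g * w, by group⟩

theorem isConjOfGen_conj_iff {g u : FreeGroup α} : IsConjOfGen (g * u * g⁻¹) ↔ IsConjOfGen u :=
  ⟨fun h => by simpa [mul_assoc] using h.conj g⁻¹, fun h => h.conj g⟩

theorem _root_.ListHurwitzStep.forall_isConjOfGen_iff {l l' : List (FreeGroup α)}
    (h : ListHurwitzStep l l') : (∀ u ∈ l', IsConjOfGen u) ↔ ∀ u ∈ l, IsConjOfGen u := by
  obtain ⟨l₁, a, b, l₂, rfl, rfl⟩ := h
  simp only [List.forall_mem_append, List.forall_mem_cons, isConjOfGen_conj_iff]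
  tauto

theorem isConjOfGen_of (a : α) : IsConjOfGen (of a) := ⟨a, 1, by simp⟩

def degree : FreeGroup α →* Multiplicative ℤ := lift fun _ => .ofAdd 1

theorem IsConjOfGen.degree_eq {u : FreeGroup α} (h : IsConjOfGen u) : degree u = .ofAdd 1 := by
  obtain ⟨a, w, rfl⟩ := h
  rw [_root_.map_mul, _root_.map_mul, _root_.map_inv, mul_inv_cancel_comm, degree, lift_apply_of]

theorem degree_prod {l : List (FreeGroup α)} (hl : ∀ u ∈ l, IsConjOfGen u) :
    degree l.prod = .ofAdd (l.length : ℤ) := by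
  induction l with
  | nil => rfl
  | cons u l ih =>
    simp only [List.forall_mem_cons] at hl
    rw [List.prod_cons, _root_.map_mul, hl.1.degree_eq, ih hl.2, ← ofAdd_add, List.length_cons,
      Nat.cast_succ, add_comm]

variable [DecidableEq α]

theorem exists_toWord_conj_mk_eq_conjWord (a : α) :
    ∀ C : List (α × Bool), IsReduced C → ∃ D, (mk C * of a * (mk C)⁻¹).toWord = conjWord D a := by
  intro C
  induction C using List.reverseRecOn with
  | nil => exact fun _ => ⟨[], by simp [conjWord, ← one_eq_mk, toWord_of]⟩
  | append_singleton C b ih =>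
    intro hC
    by_cases hb : b.1 = a
    · obtain ⟨D, hD⟩ := ih (hC.infix ⟨[], [b], by simp⟩)
      refine ⟨D, ?_⟩
      have hcomm : mk [b] * of a = of a * mk [b] := by
        rcases b with ⟨b, _ | _⟩ <;> simp only at hb <;> subst hb
        · rw [show mk [(b, false)] = (of b)⁻¹ from rfl]; group
        · rfl
      rw [← hD, ← mul_mk]
      congr 1
      calc mk C * mk [b] * of a * (mk C * mk [b])⁻¹
          = mk C * (mk [b] * of a) * (mk [b])⁻¹ * (mk C)⁻¹ := by group
        _ = mk C * of a * (mk C)⁻¹ := by rw [hcomm]; group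
    · refine ⟨C ++ [b], ?_⟩
      rw [← mk_conjWord, toWord_mk, IsReduced.reduce_eq]
      have hjoin : IsReduced (C ++ [b] ++ [(a, true)]) :=
        hC.append_overlap (isReduced_cons_cons.2 ⟨fun h => absurd h hb, .singleton⟩) (by simp)
      have e : invRev (C ++ [b]) = (b.1, !b.2) :: invRev C := by simp [FreeGroup.invRev]
      have hinv : IsReduced ((a, true) :: invRev (C ++ [b])) := by
        rw [e]
        exact isReduced_cons_cons.2 ⟨fun h => absurd h.symm hb, e ▸ hC.invRev⟩
      convert hjoin.append_overlap hinv (by simp) using 1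
      simp [conjWord, FreeGroup.invRev]

theorem IsConjOfGen.exists_toWord_eq_conjWord {u : FreeGroup α} (h : IsConjOfGen u) :
    ∃ C a, u.toWord = conjWord C a := by
  obtain ⟨a, w, rfl⟩ := h
  obtain ⟨C, hC⟩ := exists_toWord_conj_mk_eq_conjWord a w.toWord isReduced_toWord
  exact ⟨C, a, by rwa [mk_toWord] at hC⟩

theorem exists_reduce_append_eq :
    ∀ R S : List (α × Bool), IsReduced R → IsReduced S →
      ∃ R' S' c, R = R' ++ c ∧ S = invRev c ++ S' ∧ reduce (R ++ S) = R' ++ S' := by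
  intro R
  induction R using List.reverseRecOn with
  | nil => exact fun S _ hS => ⟨[], S, [], rfl, rfl, hS.reduce_eq⟩
  | append_singleton R a ih =>
    intro S hR hS
    rcases S with _ | ⟨b, S⟩
    · exact ⟨R ++ [a], [], [], (List.append_nil _).symm, rfl, by simpa using hR.reduce_eq⟩
    by_cases hab : a.1 = b.1 → a.2 = b.2
    · have hRS : IsReduced (R ++ [a] ++ b :: S) :=
        hR.append_overlap (isReduced_cons_cons.2 ⟨hab, hS⟩) (by simp)
      exact ⟨R ++ [a], b :: S, [], (List.append_nil _).symm, rfl, hRS.reduce_eq⟩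
    · obtain ⟨R', S', c, rfl, rfl, hc⟩ :=
        ih S (hR.infix ⟨[], [a], by simp⟩) (hS.infix ⟨[b], [], by simp⟩)
      have hb : b = (a.1, !a.2) := by
        obtain ⟨a₁, a₂⟩ := a; obtain ⟨b₁, b₂⟩ := b
        simp only [Classical.not_imp] at hab
        obtain ⟨rfl, h⟩ := hab
        cases a₂ <;> cases b₂ <;> simp_all
      refine ⟨R', S', c ++ [a], by simp, by simp [hb, FreeGroup.invRev], ?_⟩
      rw [← hc, hb, List.append_assoc, List.singleton_append]
      exact reduce.Step.eq Red.Step.not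

theorem exists_toWord_mul (x y : FreeGroup α) :
    ∃ R S c, x.toWord = R ++ c ∧ y.toWord = invRev c ++ S ∧ (x * y).toWord = R ++ S := by
  rw [toWord_mul]
  exact exists_reduce_append_eq _ _ isReduced_toWord isReduced_toWord

theorem norm_conj_of_le (g : FreeGroup α) (a : α) : norm (g * of a * g⁻¹) ≤ 2 * norm g + 1 := by
  have h₁ := norm_mul_le (g * of a) g⁻¹
  have h₂ := norm_mul_le g (of a)
  rw [norm_inv_eq, norm_of] at *
  omega

theorem norm_eq_of_toWord_eq_conjWord {v : FreeGroup α} {V : List (α × Bool)} {y : α}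
    (hv : v.toWord = conjWord V y) : norm v = 2 * V.length + 1 := by
  rw [norm, hv, length_conjWord]

theorem eq_of_toWord_eq_conjWord {v : FreeGroup α} {V : List (α × Bool)} {y : α}
    (hv : v.toWord = conjWord V y) : v = mk V * of y * (mk V)⁻¹ := by
  rw [← mk_conjWord, ← hv, mk_toWord]

theorem norm_conj_lt {g v : FreeGroup α} {V : List (α × Bool)} {y : α}
    (hv : v.toWord = conjWord V y) (hg : norm (g * mk V) < V.length) :
    norm (g * v * g⁻¹) < norm v := by
  have h := norm_conj_of_le (g * mk V) y
  rw [norm_eq_of_toWord_eq_conjWord hv, eq_of_toWord_eq_conjWord hv]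
  calc norm (g * (mk V * of y * (mk V)⁻¹) * g⁻¹) = norm (g * mk V * of y * (g * mk V)⁻¹) := by
        congr 1; group
    _ < 2 * V.length + 1 := by omega

theorem norm_conj_lt_of_prefix_left {u v : FreeGroup α} {W V : List (α × Bool)} {x y : α}
    (hu : u.toWord = conjWord W x) (hv : v.toWord = conjWord V y)
    (h : W ++ [(x, false)] <+: V) : norm (u * v * u⁻¹) < norm v := by
  obtain ⟨D, rfl⟩ := h
  refine norm_conj_lt hv ?_
  have hmk : u * mk (W ++ [(x, false)] ++ D) = mk W * mk D := by
    rw [eq_of_toWord_eq_conjWord hu, ← mul_mk, ← mul_mk, show mk [(x, false)] = (of x)⁻¹ from rfl]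
    group
  have := norm_mul_le (mk W) (mk D)
  have := norm_mk_le (L₁ := W)
  have := norm_mk_le (L₁ := D)
  simp only [hmk, List.length_append, List.length_singleton]
  omega

theorem norm_conj_lt_of_prefix_right {u v : FreeGroup α} {W V : List (α × Bool)} {x y : α}
    (hu : u.toWord = conjWord W x) (hv : v.toWord = conjWord V y)
    (h : V ++ [(y, true)] <+: W) : norm (v⁻¹ * u * v) < norm u := by
  obtain ⟨D, rfl⟩ := h
  rw [← inv_inv v, inv_inv v⁻¹]
  refine norm_conj_lt hu ?_
  have hmk : v⁻¹ * mk (V ++ [(y, true)] ++ D) = mk V * mk D := by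
    rw [eq_of_toWord_eq_conjWord hv, ← mul_mk, ← mul_mk, show mk [(y, true)] = of y from rfl]
    group
  have := norm_mul_le (mk V) (mk D)
  have := norm_mk_le (L₁ := V)
  have := norm_mk_le (L₁ := D)
  simp only [hmk, List.length_append, List.length_singleton]
  omega

theorem exists_toWord_mul_eq_of_norm_le {P u v : FreeGroup α} {Q W V : List (α × Bool)} {x y : α}
    (hP : P.toWord = Q ++ (x, true) :: invRev W)
    (hu : u.toWord = conjWord W x) (hv : v.toWord = conjWord V y)
    (huv : norm v ≤ norm (u * v * u⁻¹)) (hvu : norm u ≤ norm (v⁻¹ * u * v)) :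
    ∃ Q', (P * v).toWord = Q' ++ (y, true) :: invRev V ∧
      norm P + 1 ≤ norm (P * v) ∧ norm P + V.length + 1 ≤ norm (P * v) + W.length := by
  obtain ⟨R, S, c, hPc, hvc, hPv⟩ := exists_toWord_mul P v
  have hc : c.length ≤ W.length ∧ c.length ≤ V.length := by
    by_contra hlt
    -- `invRev c` is a common prefix of the words of `P⁻¹` and `v`, and it would reach past
    -- the middle letter of `u` or of `v`
    have hA : W ++ [(x, false)] <+: invRev P.toWord :=
      ⟨invRev Q, by rw [hP, invRev_append, invRev_cons, invRev_invRev]; rfl⟩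
    have hB : V ++ [(y, true)] <+: v.toWord := ⟨invRev V, by simp [hv, conjWord]⟩
    have hcP : invRev c <+: invRev P.toWord := ⟨invRev R, by rw [hPc, invRev_append]⟩
    have hcv : invRev c <+: v.toWord := ⟨S, hvc.symm⟩
    rcases le_total W.length V.length with hWV | hVW
    · have hAc := List.prefix_of_prefix_length_le hA hcP (by simp [invRev_length]; omega)
      have hAB := List.prefix_of_prefix_length_le (hAc.trans hcv) hB (by simp; omega)
      rcases List.prefix_concat_iff.1 hAB with h | h
      · simp at h
      · exact (norm_conj_lt_of_prefix_left hu hv h).not_ge huv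
    · have hBc := List.prefix_of_prefix_length_le hB hcv (by simp [invRev_length]; omega)
      have hBA := List.prefix_of_prefix_length_le (hBc.trans hcP) hA (by simp; omega)
      rcases List.prefix_concat_iff.1 hBA with h | h
      · simp at h
      · exact (norm_conj_lt_of_prefix_right hu hv h).not_ge hvu
  have hS : S = V.drop c.length ++ (y, true) :: invRev V := by
    have := congrArg (List.drop c.length) hvc
    rwa [hv, conjWord, List.drop_append_of_le_length hc.2, List.drop_left' invRev_length,
      eq_comm] at this
  refine ⟨R ++ V.drop c.length, by rw [hPv, hS, List.append_assoc], ?_⟩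
  have hlenP : norm P = R.length + c.length := by rw [norm, hPc, List.length_append]
  have hlenPv : norm (P * v) = R.length + S.length := by rw [norm, hPv, List.length_append]
  have hlenv : 2 * V.length + 1 = c.length + S.length := by
    rw [← length_conjWord V y, ← hv, hvc, List.length_append, invRev_length]
  omega

theorem toWord_prod_map_of (as : List α) :
    ((as.map of).prod).toWord = as.map fun a => (a, true) := by
  rw [← mk_map_true, toWord_mk, (isReduced_map_true as).reduce_eq]

theorem norm_prod_map_of (as : List α) : norm (as.map of).prod = as.length := by
  rw [norm, toWord_prod_map_of, List.length_map]

def IsHurwitzReduced (l : List (FreeGroup α)) : Prop :=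
  l.IsChain fun a b => norm b ≤ norm (a * b * a⁻¹) ∧ norm a ≤ norm (b⁻¹ * a * b)

/-- `norm u + 2 k ≤ 2 |P| + 1` says that the conjugator of each entry `u` has length at most
`|P| - k`, where `P` is the product of the `k` entries. -/
theorem IsHurwitzReduced.exists_conjWord_suffix :
    ∀ (l : List (FreeGroup α)) (v : FreeGroup α), (∀ u ∈ l ++ [v], IsConjOfGen u) →
      IsHurwitzReduced (l ++ [v]) →
      ∃ C Q y, v.toWord = conjWord C y ∧ (l ++ [v]).prod.toWord = Q ++ (y, true) :: invRev C ∧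
        ∀ u ∈ l ++ [v], norm u + 2 * (l.length + 1) ≤ 2 * norm (l ++ [v]).prod + 1 := by
  intro l
  induction l using List.reverseRecOn with
  | nil =>
    intro v hl _
    obtain ⟨C, y, hv⟩ := (hl v (by simp)).exists_toWord_eq_conjWord
    refine ⟨C, C, y, hv, by simpa [conjWord] using hv, ?_⟩
    simp [norm_eq_of_toWord_eq_conjWord hv]
  | append_singleton l u ih =>
    intro v hl hr
    rw [IsHurwitzReduced, List.isChain_append] at hr
    obtain ⟨W, Q, x, hu, hP, hbound⟩ :=
      ih u (fun z hz => hl z (List.mem_append_left _ hz)) hr.1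
    obtain ⟨V, y, hv⟩ := (hl v (by simp)).exists_toWord_eq_conjWord
    have huv := hr.2.2 u (by simp) v (by simp)
    obtain ⟨Q', hPv, h₁, h₂⟩ := exists_toWord_mul_eq_of_norm_le hP hu hv huv.1 huv.2
    rw [List.prod_append, List.prod_singleton]
    refine ⟨V, Q', y, hv, hPv, fun z hz => ?_⟩
    have hu' := hbound u (by simp)
    rw [norm_eq_of_toWord_eq_conjWord hu] at hu'
    simp only [List.length_append, List.length_singleton] at hu' ⊢
    rcases List.mem_append.1 hz with hz | hz
    · have := hbound z hz
      omega
    · rw [List.mem_singleton.1 hz, norm_eq_of_toWord_eq_conjWord hv]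
      omega

theorem IsHurwitzReduced.norm_add_two_mul_length_le {l : List (FreeGroup α)}
    (hl : ∀ u ∈ l, IsConjOfGen u) (hr : IsHurwitzReduced l) :
    ∀ u ∈ l, norm u + 2 * l.length ≤ 2 * norm l.prod + 1 := by
  rcases l.eq_nil_or_concat' with rfl | ⟨l, v, rfl⟩
  · simp
  · obtain ⟨-, -, -, -, -, h⟩ := exists_conjWord_suffix l v hl hr
    simpa using h

theorem IsHurwitzReduced.eq_map_of {l : List (FreeGroup α)} {as : List α}
    (hl : ∀ u ∈ l, IsConjOfGen u) (hr : IsHurwitzReduced l) (hprod : l.prod = (as.map of).prod) :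
    l = as.map of := by
  have hlen : l.length = norm l.prod := by
    have := degree_prod hl
    rw [hprod, degree_prod (List.forall_mem_map.2 fun a _ => isConjOfGen_of a),
      List.length_map] at this
    rw [hprod, norm_prod_map_of]
    exact_mod_cast (Multiplicative.ofAdd.injective this).symm
  have hgen : ∀ u ∈ l, u ∈ Set.range of := fun u hu => by
    obtain ⟨C, a, hC⟩ := (hl u hu).exists_toWord_eq_conjWord
    have := hr.norm_add_two_mul_length_le hl u hu
    rw [norm_eq_of_toWord_eq_conjWord hC] at this
    have hC₀ : C = [] := List.eq_nil_of_length_eq_zero (by omega)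
    exact ⟨a, by rw [eq_of_toWord_eq_conjWord hC, hC₀]; simp [← one_eq_mk]⟩
  obtain ⟨bs, rfl⟩ : l ∈ Set.range (List.map of) := by rwa [Set.range_list_map]
  have := congrArg toWord hprod
  rw [toWord_prod_map_of, toWord_prod_map_of] at this
  rw [(List.map_injective_iff.2 (Prod.mk_left_injective true)) this]

theorem exists_listHurwitzStep_of_not_isHurwitzReduced {l : List (FreeGroup α)}
    (h : ¬IsHurwitzReduced l) :
    ∃ l', (ListHurwitzStep l l' ∨ ListHurwitzStep l' l) ∧
      (l'.map norm).sum < (l.map norm).sum := by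
  rw [IsHurwitzReduced, List.isChain_iff_forall_rel_of_append_cons_cons] at h
  push Not at h
  obtain ⟨a, b, l₁, l₂, rfl, hab⟩ := h
  by_cases hb : norm b ≤ norm (a * b * a⁻¹)
  · refine ⟨l₁ ++ b :: (b⁻¹ * a * b) :: l₂, .inr ⟨_, _, _, _, rfl, by group⟩, ?_⟩
    have := hab hb
    simp only [List.map_append, List.map_cons, List.sum_append, List.sum_cons]
    omega
  · refine ⟨l₁ ++ (a * b * a⁻¹) :: a :: l₂, .inl ⟨_, _, _, _, rfl, rfl⟩, ?_⟩
    simp only [List.map_append, List.map_cons, List.sum_append, List.sum_cons]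
    omega

theorem eqvGen_listHurwitzStep_map_of {as : List α} (l : List (FreeGroup α))
    (hl : ∀ u ∈ l, IsConjOfGen u) (hprod : l.prod = (as.map of).prod) :
    Relation.EqvGen ListHurwitzStep l (as.map of) := by
  by_cases hr : IsHurwitzReduced l
  · rw [hr.eq_map_of hl hprod]
    exact .refl _
  obtain ⟨l', hstep, hlt⟩ := exists_listHurwitzStep_of_not_isHurwitzReduced hr
  have hprod' : l'.prod = l.prod := hstep.elim (·.prod_eq) (·.prod_eq.symm)
  have hl' : ∀ u ∈ l', IsConjOfGen u :=
    hstep.elim (·.forall_isConjOfGen_iff.2 hl) (·.forall_isConjOfGen_iff.1 hl)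
  have hll' : Relation.EqvGen ListHurwitzStep l l' :=
    hstep.elim (.rel _ _) fun h => .symm _ _ (.rel _ _ h)
  exact .trans _ _ _ hll' (eqvGen_listHurwitzStep_map_of l' hl' (hprod'.trans hprod))
termination_by (l.map norm).sum

end FreeGroup

open FreeGroup in
/-- Artin's theorem: the Hurwitz action of `B_n` on the set `Red(γ)` of `n`-tuples of
conjugates of the generators of the free group `F_n` whose product is the Coxeter
element `γ = σ₁⋯σₙ` is transitive. -/
theorem stmt_8 {n : ℕ} (r r' : Fin n → FreeGroup (Fin n))
    (hr : (∀ i, ∃ (j : Fin n) (w : FreeGroup (Fin n)), r i = w * FreeGroup.of j * w⁻¹) ∧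
      (List.ofFn r).prod = (List.ofFn fun i => (FreeGroup.of i : FreeGroup (Fin n))).prod)
    (hr' : (∀ i, ∃ (j : Fin n) (w : FreeGroup (Fin n)), r' i = w * FreeGroup.of j * w⁻¹) ∧
      (List.ofFn r').prod = (List.ofFn fun i => (FreeGroup.of i : FreeGroup (Fin n))).prod) :
    Relation.EqvGen HurwitzStep r r' := by
  have hγ : (List.ofFn fun i => (of i : FreeGroup (Fin n))) = (List.ofFn id).map of := by
    rw [List.map_ofFn]; rfl
  rw [hγ] at hr hr'
  have h₁ := eqvGen_listHurwitzStep_map_of _ (List.forall_mem_ofFn_iff.2 hr.1) hr.2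
  have h₂ := eqvGen_listHurwitzStep_map_of _ (List.forall_mem_ofFn_iff.2 hr'.1) hr'.2
  exact (h₁.trans _ _ _ (h₂.symm _ _)).hurwitzStep_of_ofFn
end

section
/- In the free group F_2, the Hurwitz action of the braid group B_2 ≅ ℤ on the pair (σ_1, σ_2) is free: if k ≠ 0 then τ_1^k(σ_1, σ_2) ≠ (σ_1, σ_2), where τ_1(g_1,g_2) = (g_1 g_2 g_1^{-1}, g_1). -/
/-!
Represent `F₂` on `ℤ` by sending `σ₁` and `σ₂` to the reflections `y ↦ -y` and `y ↦ -1 - y`.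
Since `ρ_a ρ_b ρ_a = ρ_{2a-b}` for the reflections `ρ_k : y ↦ k - y`, the move `τ₁` sends a pair
represented by `(ρ_k, ρ_{k-1})` to one represented by `(ρ_{k+1}, ρ_k)`; hence `τ₁^k (σ₁, σ₂)` is
represented by `(ρ_k, ρ_{k-1})`, which differs from `(ρ_0, ρ_{-1})` unless `k = 0`.
-/

/-- The Hurwitz move `τ₁` of `B₂` acting on pairs of elements of the free group `F₂`,
with inverse `(g₁,g₂) ↦ (g₂, g₂⁻¹ g₁ g₂)`. -/
noncomputable def tauOne : Equiv.Perm (FreeGroup Bool × FreeGroup Bool) where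
  toFun p := (p.1 * p.2 * p.1⁻¹, p.1)
  invFun p := (p.2, p.2⁻¹ * p.1 * p.2)
  left_inv := by rintro ⟨a, b⟩; simp [mul_assoc]
  right_inv := by rintro ⟨a, b⟩; simp [mul_assoc]

lemma tauOne_apply (p : FreeGroup Bool × FreeGroup Bool) :
    tauOne p = (p.1 * p.2 * p.1⁻¹, p.1) := rfl

lemma tauOne_inv_apply (p : FreeGroup Bool × FreeGroup Bool) :
    tauOne⁻¹ p = (p.2, p.2⁻¹ * p.1 * p.2) := rfl

def reflect (k : ℤ) : Equiv.Perm ℤ :=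
  Function.Involutive.toPerm (k - ·) (sub_sub_cancel k)

lemma reflect_apply (k y : ℤ) : reflect k y = k - y := rfl

lemma reflect_injective : Function.Injective reflect := fun a b h => by
  simpa [reflect_apply] using congrArg (· 0) h

lemma reflect_inv (k : ℤ) : (reflect k)⁻¹ = reflect k :=
  Equiv.ext fun y => by rw [Equiv.Perm.inv_eq_iff_eq, reflect_apply, reflect_apply, sub_sub_cancel]

lemma reflect_mul_reflect_mul_reflect (a b : ℤ) :
    reflect a * reflect b * reflect a = reflect (2 * a - b) :=
  Equiv.ext fun y => by simp only [Equiv.Perm.mul_apply, reflect_apply]; ring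

noncomputable def reflectRep : FreeGroup Bool →* Equiv.Perm ℤ :=
  FreeGroup.lift fun t => if t then reflect (-1) else reflect 0

section

variable {p : FreeGroup Bool × FreeGroup Bool} {k : ℤ}

lemma reflectRep_tauOne (hp : Prod.map reflectRep reflectRep p = (reflect k, reflect (k - 1))) :
    Prod.map reflectRep reflectRep (tauOne p) = (reflect (k + 1), reflect (k + 1 - 1)) := by
  obtain ⟨h₁, h₂⟩ := Prod.mk.inj hp
  rw [tauOne_apply, Prod.map_apply, map_mul, map_mul, map_inv, h₁, h₂, reflect_inv,
    reflect_mul_reflect_mul_reflect]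
  congr 2 <;> ring

lemma reflectRep_tauOne_inv (hp : Prod.map reflectRep reflectRep p = (reflect k, reflect (k - 1))) :
    Prod.map reflectRep reflectRep (tauOne⁻¹ p) = (reflect (k - 1), reflect (k - 1 - 1)) := by
  obtain ⟨h₁, h₂⟩ := Prod.mk.inj hp
  rw [tauOne_inv_apply, Prod.map_apply, map_mul, map_mul, map_inv, h₁, h₂, reflect_inv,
    reflect_mul_reflect_mul_reflect]
  congr 2; ring

end

lemma reflectRep_tauOne_zpow (k : ℤ) :
    Prod.map reflectRep reflectRep ((tauOne ^ k) (FreeGroup.of false, FreeGroup.of true)) =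
      (reflect k, reflect (k - 1)) := by
  induction k using Int.induction_on with
  | zero => simp [reflectRep]
  | succ k ih =>
    rw [add_comm, zpow_one_add, Equiv.Perm.mul_apply, add_comm]
    exact reflectRep_tauOne ih
  | pred k ih =>
    rw [sub_eq_neg_add, zpow_add, zpow_neg_one, Equiv.Perm.mul_apply, ← sub_eq_neg_add]
    exact reflectRep_tauOne_inv ih

/-- The Hurwitz action of `B₂ ≅ ℤ` on the pair `(σ₁, σ₂)` of generators of `F₂`
is free: no nonzero power of `τ₁` fixes `(σ₁, σ₂)`. -/
theorem stmt_9 (m : ℤ) (hm : m ≠ 0) :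
    (tauOne ^ m) (FreeGroup.of false, FreeGroup.of true) ≠
      (FreeGroup.of false, FreeGroup.of true) := by
  intro h
  have hrep := reflectRep_tauOne_zpow m
  rw [h] at hrep
  have h₀ : reflectRep (FreeGroup.of false) = reflect m := congrArg Prod.fst hrep
  exact hm (reflect_injective (by simpa [reflectRep] using h₀.symm))
end
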